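/- PCKV-GRR satisfies ε-local differential privacy with ε = ln((e^{ε₁+ε₂} + λ)/(min{e^{ε₁}, (e^{ε₂}+1)/2} + λ)), where λ = (ℓ−1)(e^{ε₂}+1)/2: for any two nonempty key-value sets S₁, S₂ and every output pair y' = ⟨k', v'⟩ with k' ∈ {1,…,d'} and v' ∈ {1, −1}, P(y' | S₁) ≤ e^{ε} · P(y' | S₂). -/

import Mathlib

open Finset

/-- Probability that PCKV-GRR outputs the pair `⟨k', v'⟩` (with
`v' ∈ {1, −1}`) given that key `k` with value `vk ∈ [−1,1]` was sampled:
it outputs `⟨k, 1⟩` with probability `a(1+(2p−1)vk)/2`, `⟨k, −1⟩` with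
probability `a(1−(2p−1)vk)/2`, and each pair with a different key with
probability `b/2`. -/
noncomputable def grrCondProb (d ℓ : ℕ) (a b p : ℝ) (k : Fin (d + ℓ))
    (vk : ℝ) (y : Fin (d + ℓ) × ℤ) : ℝ :=
  if y.1 = k then
    (if y.2 = 1 then a * (1 + (2*p - 1) * vk) / 2
     else a * (1 - (2*p - 1) * vk) / 2)
  else b / 2

/-- Total probability `P(y | S)` that PCKV-GRR outputs the pair `y` on the
key-value set `S` (key set `K` with values `v`): with probability
`η = |K|/max{|K|, ℓ}` a key is sampled uniformly from `K` (with its value),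
and with probability `1 − η` a dummy key is sampled uniformly from
`{d+1, …, d+ℓ}` (with value `0`). -/
noncomputable def grrOutProb (d ℓ : ℕ) (a b p : ℝ) (K : Finset (Fin (d + ℓ)))
    (v : Fin (d + ℓ) → ℝ) (y : Fin (d + ℓ) × ℤ) : ℝ :=
  ((K.card : ℝ) / max (K.card : ℝ) (ℓ : ℝ)) / (K.card : ℝ) *
      ∑ k ∈ K, grrCondProb d ℓ a b p k (v k) y
    + (1 - (K.card : ℝ) / max (K.card : ℝ) (ℓ : ℝ)) / (ℓ : ℝ) *
      ∑ k ∈ univ.filter (fun k : Fin (d + ℓ) => d ≤ (k : ℕ)),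
        grrCondProb d ℓ a b p k 0 y

/-!
Whatever the input, the output `⟨k', v'⟩` has probability `w q + (1 - w) b / 2`, where `q` is the
probability of reporting `⟨k', v'⟩` once the key `k'` itself was sampled and `w ≤ 1 / ℓ` is the
probability of sampling `k'`: a true key is sampled with probability `1 / max |K| ℓ`, a dummy key
with probability `(1 - |K| / max |K| ℓ) / ℓ`. Since `(e^{ε₂} + 1) q ∈ [e^{ε₁} b, e^{ε₁+ε₂} b]`,
the number `ℓ (e^{ε₂} + 1) P(y' | S) - λ b` is a convex combination of `(e^{ε₂} + 1) q` and
`(e^{ε₂} + 1) b / 2`, hence lies in `b [min e^{ε₁} ((e^{ε₂} + 1) / 2), e^{ε₁+ε₂}]`, uniformly in `S`;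
the ratio of its endpoints is `e^ε`.
-/

lemma mul_mix_sub_mem_Icc {c w x y : ℝ} (hc : 0 ≤ c) (hw : 0 ≤ w) (hcw : c * w ≤ 1) :
    c * (w * x + (1 - w) * y) - (c - 1) * y ∈ Set.Icc (min x y) (max x y) := by
  have hcombo : c * (w * x + (1 - w) * y) - (c - 1) * y = (c * w) • x + (1 - c * w) • y := by
    simp only [smul_eq_mul]
    ring
  rw [hcombo]
  have hcw₀ : 0 ≤ c * w := mul_nonneg hc hw
  exact ⟨Convex.min_le_combo x y hcw₀ (by linarith) (by ring),
    Convex.combo_le_max x y hcw₀ (by linarith) (by ring)⟩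

lemma le_div_mul_of_mul_le_of_mul_le {c s x y N D : ℝ} (hc : 0 < c) (hD : 0 < D) (hN : 0 ≤ N)
    (hx : c * x ≤ s * N) (hy : s * D ≤ c * y) : x ≤ N / D * y := by
  refine le_of_mul_le_mul_left ?_ hc
  calc c * x ≤ s * N := hx
    _ = N / D * (s * D) := by field_simp
    _ ≤ N / D * (c * y) := by gcongr
    _ = c * (N / D * y) := by ring

lemma card_filter_le_val (d ℓ : ℕ) : #{k : Fin (d + ℓ) | d ≤ (k : ℕ)} = ℓ := by
  have hlt := Fin.card_filter_val_lt (n := d + ℓ) (m := d)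
  have hsplit := card_filter_add_card_filter_not (s := univ) fun k : Fin (d + ℓ) ↦ (k : ℕ) < d
  simp only [not_lt, card_univ, Fintype.card_fin] at hsplit
  omega

section GRR

variable {d ℓ : ℕ} {a b p : ℝ}

lemma sum_grrCondProb_of_mem {F : Finset (Fin (d + ℓ))} (v : Fin (d + ℓ) → ℝ)
    {y : Fin (d + ℓ) × ℤ} (h : y.1 ∈ F) :
    ∑ k ∈ F, grrCondProb d ℓ a b p k (v k) y
      = grrCondProb d ℓ a b p y.1 (v y.1) y + ((#F : ℝ) - 1) * (b / 2) := by
  have hoff : ∀ k ∈ F.erase y.1, grrCondProb d ℓ a b p k (v k) y = b / 2 := fun k hk ↦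
    if_neg fun he ↦ (mem_erase.mp hk).1 he.symm
  rw [← add_sum_erase F _ h, sum_congr rfl hoff, sum_const, card_erase_of_mem h, nsmul_eq_mul,
    Nat.cast_pred (card_pos.mpr ⟨y.1, h⟩)]

lemma sum_grrCondProb_of_notMem {F : Finset (Fin (d + ℓ))} (v : Fin (d + ℓ) → ℝ)
    {y : Fin (d + ℓ) × ℤ} (h : y.1 ∉ F) :
    ∑ k ∈ F, grrCondProb d ℓ a b p k (v k) y = #F * (b / 2) := by
  have hoff : ∀ k ∈ F, grrCondProb d ℓ a b p k (v k) y = b / 2 := fun k hk ↦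
    if_neg fun he : y.1 = k ↦ h (he ▸ hk)
  rw [sum_congr rfl hoff, sum_const, nsmul_eq_mul]

lemma grrCondProb_self_mem_Icc (ha : 0 ≤ a) (hp : 1 / 2 ≤ p) {u : ℝ} (hu : u ∈ Set.Icc (-1) 1)
    (y : Fin (d + ℓ) × ℤ) :
    grrCondProb d ℓ a b p y.1 u y ∈ Set.Icc (a * (1 - p)) (a * p) := by
  obtain ⟨hu₁, hu₂⟩ := hu
  have hp' : 0 ≤ 2 * p - 1 := by linarith
  simp only [grrCondProb]
  split_ifs <;> constructor <;> nlinarith [mul_nonneg ha (mul_nonneg hp' (sub_nonneg.2 hu₂)),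
    mul_nonneg ha (mul_nonneg hp' (neg_le_iff_add_nonneg.1 hu₁))]

lemma grrOutProb_eq_mix (hℓ : 0 < ℓ) {K : Finset (Fin (d + ℓ))} (hK : ∀ i ∈ K, (i : ℕ) < d)
    (v : Fin (d + ℓ) → ℝ) (y : Fin (d + ℓ) × ℤ) :
    ∃ w, 0 ≤ w ∧ (ℓ : ℝ) * w ≤ 1 ∧ grrOutProb d ℓ a b p K v y =
      w * grrCondProb d ℓ a b p y.1 (if y.1 ∈ K then v y.1 else 0) y + (1 - w) * (b / 2) := by
  simp only [grrOutProb]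
  set n : ℝ := ((#K : ℕ) : ℝ)
  set M : ℝ := max n ℓ
  have hℓ' : (0 : ℝ) < ℓ := Nat.cast_pos.mpr hℓ
  have hM : 0 < M := hℓ'.trans_le (le_max_right _ _)
  have hnM : n / M ≤ 1 := div_le_one_of_le₀ (le_max_left _ _) hM.le
  have hℓM : ℓ / M ≤ 1 := div_le_one_of_le₀ (le_max_right _ _) hM.le
  have hdummy : ∀ c, (1 - n / M) / ℓ * (ℓ * c) = (1 - n / M) * c := fun c ↦ by
    field_simp
  by_cases hmem : y.1 ∈ K
  · have hnd : y.1 ∉ ({k : Fin (d + ℓ) | d ≤ (k : ℕ)} : Finset _) := by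
      simpa using hK _ hmem
    have hn : 0 < n := Nat.cast_pos.mpr (card_pos.mpr ⟨_, hmem⟩)
    refine ⟨1 / M, by positivity, by rwa [mul_one_div], ?_⟩
    rw [sum_grrCondProb_of_mem v hmem, sum_grrCondProb_of_notMem (fun _ ↦ 0) hnd,
      card_filter_le_val, hdummy, if_pos hmem]
    field_simp
    ring
  have hkeys : n / M / n * (n * (b / 2)) = n / M * (b / 2) := by
    rcases eq_or_ne n 0 with hn | hn
    · simp [hn]
    · field_simp
  rw [sum_grrCondProb_of_notMem v hmem, hkeys, if_neg hmem]
  by_cases hdum : d ≤ (y.1 : ℕ)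
  · refine ⟨(1 - n / M) / ℓ, div_nonneg (by linarith) hℓ'.le, ?_, ?_⟩
    · rw [mul_div_cancel₀ _ hℓ'.ne']
      linarith [div_nonneg (Nat.cast_nonneg #K) hM.le]
    · rw [sum_grrCondProb_of_mem (fun _ ↦ 0) (by simpa using hdum), card_filter_le_val]
      field_simp
      ring
  · refine ⟨0, le_rfl, by simp, ?_⟩
    rw [sum_grrCondProb_of_notMem (fun _ ↦ 0) (by simpa using hdum), card_filter_le_val, hdummy]
    ring

lemma grrOutProb_mem_Icc {α β : ℝ} (hα : 1 ≤ α) (hβ : 1 ≤ β) (hb : 0 ≤ b) (ha : a = α * b)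
    (hp : p = β / (β + 1)) (hℓ : 0 < ℓ) {K : Finset (Fin (d + ℓ))} (hK : ∀ i ∈ K, (i : ℕ) < d)
    {v : Fin (d + ℓ) → ℝ} (hv : ∀ i ∈ K, v i ∈ Set.Icc (-1 : ℝ) 1) (y : Fin (d + ℓ) × ℤ) :
    ℓ * (β + 1) * grrOutProb d ℓ a b p K v y ∈
      Set.Icc (b * (min α ((β + 1) / 2) + (ℓ - 1) * (β + 1) / 2))
        (b * (α * β + (ℓ - 1) * (β + 1) / 2)) := by
  obtain ⟨w, hw, hℓw, hP⟩ := grrOutProb_eq_mix (a := a) (b := b) (p := p) hℓ hK v y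
  set q := grrCondProb d ℓ a b p y.1 (if y.1 ∈ K then v y.1 else 0) y
  have hβ₁ : 0 < β + 1 := by linarith
  have hq : q ∈ Set.Icc (a * (1 - p)) (a * p) := by
    refine grrCondProb_self_mem_Icc (ha ▸ mul_nonneg (by linarith) hb) ?_ ?_ y
    · rw [hp, le_div_iff₀ hβ₁]
      linarith
    · split_ifs with hmem
      exacts [hv _ hmem, ⟨by norm_num, by norm_num⟩]
  have hX : α * b ≤ (β + 1) * q ∧ (β + 1) * q ≤ α * β * b := by
    have hlo : a * (1 - p) * (β + 1) = α * b := by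
      rw [ha, hp]
      field_simp
      ring
    have hhi : a * p * (β + 1) = α * β * b := by
      rw [ha, hp]
      field_simp
    constructor <;> nlinarith [hq.1, hq.2]
  obtain ⟨hmix₁, hmix₂⟩ := mul_mix_sub_mem_Icc (Nat.cast_nonneg ℓ) hw hℓw (x := (β + 1) * q)
    (y := (β + 1) * (b / 2))
  have hscale : ℓ * (β + 1) * grrOutProb d ℓ a b p K v y =
      (ℓ * (w * ((β + 1) * q) + (1 - w) * ((β + 1) * (b / 2)))
        - (ℓ - 1) * ((β + 1) * (b / 2))) + b * ((ℓ - 1) * (β + 1) / 2) := by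
    rw [hP]
    ring
  have hαβ : (β + 1) / 2 ≤ α * β := by nlinarith
  rw [hscale]
  constructor
  · have hmin : b * min α ((β + 1) / 2) ≤ min ((β + 1) * q) ((β + 1) * (b / 2)) :=
      le_min (by nlinarith [min_le_left α ((β + 1) / 2)])
        (by nlinarith [min_le_right α ((β + 1) / 2)])
    linarith
  · have hmax : max ((β + 1) * q) ((β + 1) * (b / 2)) ≤ b * (α * β) :=
      max_le (by linarith) (by nlinarith)
    linarith

end GRR

theorem pckv_grr_ldp_general (d ℓ : ℕ) (hℓ : 1 ≤ ℓ)
    (ε₁ ε₂ : ℝ) (hε₁ : 0 ≤ ε₁) (hε₂ : 0 ≤ ε₂)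
    (a b p lam : ℝ)
    (ha : a = Real.exp ε₁ / (Real.exp ε₁ + ((d + ℓ : ℕ) : ℝ) - 1))
    (hb : b = 1 / (Real.exp ε₁ + ((d + ℓ : ℕ) : ℝ) - 1))
    (hp : p = Real.exp ε₂ / (Real.exp ε₂ + 1))
    (hlam : lam = ((ℓ : ℝ) - 1) * (Real.exp ε₂ + 1) / 2)
    (K₁ K₂ : Finset (Fin (d + ℓ)))
    (hK₁d : ∀ i ∈ K₁, (i : ℕ) < d) (hK₂d : ∀ i ∈ K₂, (i : ℕ) < d)
    (v₁ v₂ : Fin (d + ℓ) → ℝ)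
    (hv₁ : ∀ i ∈ K₁, v₁ i ∈ Set.Icc (-1 : ℝ) 1)
    (hv₂ : ∀ i ∈ K₂, v₂ i ∈ Set.Icc (-1 : ℝ) 1)
    (y : Fin (d + ℓ) × ℤ) :
    grrOutProb d ℓ a b p K₁ v₁ y
      ≤ Real.exp (Real.log ((Real.exp (ε₁ + ε₂) + lam) /
            (min (Real.exp ε₁) ((Real.exp ε₂ + 1) / 2) + lam))) *
        grrOutProb d ℓ a b p K₂ v₂ y := by
  have hα : 1 ≤ Real.exp ε₁ := Real.one_le_exp hε₁
  have hβ : 1 ≤ Real.exp ε₂ := Real.one_le_exp hε₂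
  have hℓ' : (1 : ℝ) ≤ ℓ := Nat.one_le_cast.mpr hℓ
  have hb₀ : 0 ≤ b := hb ▸ div_nonneg zero_le_one (by linarith [Nat.cast_nonneg (α := ℝ) (d + ℓ)])
  have hab : a = Real.exp ε₁ * b := by rw [ha, hb, mul_one_div]
  have hlam₀ : 0 ≤ lam := hlam ▸ by positivity
  have hden : 0 < min (Real.exp ε₁) ((Real.exp ε₂ + 1) / 2) + lam :=
    add_pos_of_pos_of_nonneg (lt_min (by linarith) (by linarith)) hlam₀
  have hnum : 0 < Real.exp (ε₁ + ε₂) + lam := by positivity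
  obtain ⟨-, h₁⟩ := grrOutProb_mem_Icc hα hβ hb₀ hab hp hℓ hK₁d hv₁ y
  obtain ⟨h₂, -⟩ := grrOutProb_mem_Icc hα hβ hb₀ hab hp hℓ hK₂d hv₂ y
  rw [Real.exp_log (div_pos hnum hden)]
  rw [← Real.exp_add, ← hlam] at h₁
  rw [← hlam] at h₂
  exact le_div_mul_of_mul_le_of_mul_le (by positivity) hden hnum.le h₁ h₂

/-- **Budget composition of PCKV-GRR.** With perturbation probabilities
`a = e^{ε₁}/(e^{ε₁}+d'−1)`, `b = 1/(e^{ε₁}+d'−1)`, `p = e^{ε₂}/(e^{ε₂}+1)`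
(where `d' = d + ℓ` and `ε₁, ε₂ ≥ 0`), PCKV-GRR satisfies `ε`-LDP with
`ε = ln((e^{ε₁+ε₂} + λ)/(min{e^{ε₁}, (e^{ε₂}+1)/2} + λ))` and
`λ = (ℓ−1)(e^{ε₂}+1)/2`: for any two nonempty key-value sets and any output
pair `y = ⟨k', v'⟩` with `v' ∈ {1, −1}`, `P(y | S₁) ≤ e^ε · P(y | S₂)`. -/
theorem pckv_grr_ldp (d ℓ : ℕ) (hd : 1 ≤ d) (hℓ : 1 ≤ ℓ)
    (ε₁ ε₂ : ℝ) (hε₁ : 0 ≤ ε₁) (hε₂ : 0 ≤ ε₂)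
    (a b p lam : ℝ)
    (ha : a = Real.exp ε₁ / (Real.exp ε₁ + ((d + ℓ : ℕ) : ℝ) - 1))
    (hb : b = 1 / (Real.exp ε₁ + ((d + ℓ : ℕ) : ℝ) - 1))
    (hp : p = Real.exp ε₂ / (Real.exp ε₂ + 1))
    (hlam : lam = ((ℓ : ℝ) - 1) * (Real.exp ε₂ + 1) / 2)
    (K₁ K₂ : Finset (Fin (d + ℓ))) (hK₁ : K₁.Nonempty) (hK₂ : K₂.Nonempty)
    (hK₁d : ∀ i ∈ K₁, (i : ℕ) < d) (hK₂d : ∀ i ∈ K₂, (i : ℕ) < d)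
    (v₁ v₂ : Fin (d + ℓ) → ℝ)
    (hv₁ : ∀ i ∈ K₁, v₁ i ∈ Set.Icc (-1 : ℝ) 1)
    (hv₂ : ∀ i ∈ K₂, v₂ i ∈ Set.Icc (-1 : ℝ) 1)
    (y : Fin (d + ℓ) × ℤ) (hy : y.2 = 1 ∨ y.2 = -1) :
    grrOutProb d ℓ a b p K₁ v₁ y
      ≤ Real.exp (Real.log ((Real.exp (ε₁ + ε₂) + lam) /
            (min (Real.exp ε₁) ((Real.exp ε₂ + 1) / 2) + lam))) *
        grrOutProb d ℓ a b p K₂ v₂ y :=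
  pckv_grr_ldp_general d ℓ hℓ ε₁ ε₂ hε₁ hε₂ a b p lam ha hb hp hlam K₁ K₂ hK₁d hK₂d v₁ v₂ hv₁ hv₂ y
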